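/- With κ₁, κ₂, κ₃ > 0 and M ∈ ℕ, define u₁(z₂) = (κ₁z₂+κ₂)/(κ₁z₂+κ₂+κ₃) and u₂(z₂) = κ₃/(κ₁z₂+κ₂+κ₃). Then u₁(z₂) + u₂(z₂) = 1, and the vector-valued function h₁(z₁,z₂) = (z₁ u₁(z₂), z₁ u₂(z₂)) satisfies, for the operator L₁ acting as L₁h(z₁,z₂) = κ₁z₁z₂(h(z₁-1,z₂) - h(z₁,z₂)) + (κ₂+κ₃)(M-z₁)(h(z₁+1,z₂) - h(z₁,z₂)), the identity L₁h₁(z₁,z₂) = (κ₂(M-z₁) - κ₁z₁z₂ + Mκ₁κ₃z₂/(κ₂+κ₃+κ₁z₂), κ₃(M-z₁) - Mκ₁κ₃z₂/(κ₂+κ₃+κ₁z₂)). -/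

import Mathlib

/-! `h₁` is linear in `z₁`, so the birth–death generator acts on it by multiplying the fixed
vector `(u₁(z₂), u₂(z₂))` with the net rate `(κ₂+κ₃)(M-z₁) - κ₁z₁z₂`; what remains is a
rational-function identity in each component, over the denominator `κ₁z₂+κ₂+κ₃ > 0`. -/

theorem smul_sub_add_smul_sub_of_eq_smul {R E : Type*} [CommRing R] [AddCommGroup E]
    [Module R E] {h : R → E} {v : E} (hh : ∀ z, h z = z • v) (a b z : R) :
    a • (h (z - 1) - h z) + b • (h (z + 1) - h z) = (b - a) • v := by
  simp only [hh]
  module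

section MichaelisMenten

variable {κ₁ κ₂ κ₃ z₂ : ℝ} (M z₁ : ℝ)

theorem michaelisMenten_rate_mul_u₁ (hD : κ₁ * z₂ + κ₂ + κ₃ ≠ 0) :
    ((κ₂ + κ₃) * (M - z₁) - κ₁ * z₁ * z₂) * ((κ₁ * z₂ + κ₂) / (κ₁ * z₂ + κ₂ + κ₃))
      = κ₂ * (M - z₁) - κ₁ * z₁ * z₂ + M * κ₁ * κ₃ * z₂ / (κ₂ + κ₃ + κ₁ * z₂) := by
  have hD' : κ₂ + κ₃ + κ₁ * z₂ ≠ 0 := by rwa [add_comm, ← add_assoc]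
  field_simp
  ring

theorem michaelisMenten_rate_mul_u₂ (hD : κ₁ * z₂ + κ₂ + κ₃ ≠ 0) :
    ((κ₂ + κ₃) * (M - z₁) - κ₁ * z₁ * z₂) * (κ₃ / (κ₁ * z₂ + κ₂ + κ₃))
      = κ₃ * (M - z₁) - M * κ₁ * κ₃ * z₂ / (κ₂ + κ₃ + κ₁ * z₂) := by
  have hD' : κ₂ + κ₃ + κ₁ * z₂ ≠ 0 := by rwa [add_comm, ← add_assoc]
  field_simp
  ring

end MichaelisMenten

/-- The explicit solution of the Poisson equation `L₁h₁ = F - F̄` in the Michaelis–Menten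
model: with `u₁(z₂) = (κ₁z₂+κ₂)/(κ₁z₂+κ₂+κ₃)` and `u₂(z₂) = κ₃/(κ₁z₂+κ₂+κ₃)`,
we have `u₁ + u₂ = 1` and `h₁(z₁,z₂) = (z₁u₁(z₂), z₁u₂(z₂))` satisfies the stated identity
for the birth-death generator `L₁`. -/
theorem stmt_5 (κ₁ κ₂ κ₃ : ℝ) (hκ₁ : 0 < κ₁) (hκ₂ : 0 < κ₂) (hκ₃ : 0 < κ₃) (M : ℕ)
    (u₁ u₂ : ℝ → ℝ)
    (hu₁ : ∀ z₂, u₁ z₂ = (κ₁ * z₂ + κ₂) / (κ₁ * z₂ + κ₂ + κ₃))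
    (hu₂ : ∀ z₂, u₂ z₂ = κ₃ / (κ₁ * z₂ + κ₂ + κ₃))
    (h₁ : ℝ → ℝ → ℝ × ℝ) (hh₁ : ∀ z₁ z₂, h₁ z₁ z₂ = (z₁ * u₁ z₂, z₁ * u₂ z₂)) :
    (∀ z₂ : ℝ, 0 ≤ z₂ → u₁ z₂ + u₂ z₂ = 1) ∧
    ∀ z₁ z₂ : ℝ, 0 ≤ z₂ →
      (κ₁ * z₁ * z₂) • (h₁ (z₁ - 1) z₂ - h₁ z₁ z₂)
        + ((κ₂ + κ₃) * ((M : ℝ) - z₁)) • (h₁ (z₁ + 1) z₂ - h₁ z₁ z₂)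
      = (κ₂ * ((M : ℝ) - z₁) - κ₁ * z₁ * z₂
            + (M : ℝ) * κ₁ * κ₃ * z₂ / (κ₂ + κ₃ + κ₁ * z₂),
         κ₃ * ((M : ℝ) - z₁) - (M : ℝ) * κ₁ * κ₃ * z₂ / (κ₂ + κ₃ + κ₁ * z₂)) := by
  have hD : ∀ z₂ : ℝ, 0 ≤ z₂ → κ₁ * z₂ + κ₂ + κ₃ ≠ 0 := fun z₂ hz₂ ↦ by positivity
  refine ⟨fun z₂ hz₂ ↦ ?_, fun z₁ z₂ hz₂ ↦ ?_⟩
  · rw [hu₁, hu₂, ← add_div, div_self (hD z₂ hz₂)]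
  · have h₁_linear : ∀ z, h₁ z z₂ = z • (u₁ z₂, u₂ z₂) := fun z ↦ hh₁ z z₂
    rw [smul_sub_add_smul_sub_of_eq_smul h₁_linear, Prod.smul_mk, smul_eq_mul, smul_eq_mul,
      hu₁, hu₂, michaelisMenten_rate_mul_u₁ _ _ (hD z₂ hz₂),
      michaelisMenten_rate_mul_u₂ _ _ (hD z₂ hz₂)]
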